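/- arXiv:1506.04598 — 2 statements merged into one kernel-verified Lean document; each statement's English description precedes it below -/
import Mathlib

section
/- Let 𝔄 be an excellent based A-algebra with basis {b_i : i ∈ I} and distinguished subset I₀. Then the ℤ-bilinear product on the free abelian group with basis {t_i : i ∈ I} defined by t_i t_{i'} = Σ_{j∈I} h*_{i,i',j^!} t_j is associative, and the element Σ_{i∈I₀} t_i is a unit element for this product; thus this free abelian group becomes an associative unital ring (the asymptotic ring 𝔄^∞ of 𝔄). -/
open scoped Classical
open Finset

noncomputable section

/-- The ring `A = ℤ[v,v⁻¹]` of Laurent polynomials over `ℤ`. -/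
abbrev LP : Type := LaurentPolynomial ℤ

/-- The coefficient of `v^n` in a Laurent polynomial. -/
def lcoeff (f : LP) (n : ℤ) : ℤ := (AddMonoidAlgebra.coeff f) n

/-- A based `A`-algebra (Lusztig, 1.9), encoded by its structure constants
`h i i' j` (the coefficient of `b j` in `b i * b i'`), the coordinates `e i` of the
unit element, the involution `einv` of the index set (written `i ↦ i^!`), and the
distinguished subset `I0` of `{i | i^! = i}`. -/
structure BasedAlgebra (I : Type) [Fintype I] [DecidableEq I] where
  h : I → I → I → LP
  e : I → LP
  einv : I → I
  I0 : Finset I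
  einv_invol : ∀ i, einv (einv i) = i
  mul_assoc' : ∀ i j k l, ∑ m, h i j m * h m k l = ∑ m, h j k m * h i m l
  one_mul' : ∀ j k, ∑ i, e i * h i j k = if j = k then 1 else 0
  mul_one' : ∀ j k, ∑ i, e i * h j i k = if j = k then 1 else 0
  anti' : ∀ i i' j, h (einv i) (einv i') (einv j) = h i' i j
  I0_fixed : ∀ i ∈ I0, einv i = i

namespace BasedAlgebra

variable {I : Type} [Fintype I] [DecidableEq I]

/-- The preorder `⪯_left` on `I`, generated by: `j ⪯_left i` if `h i' i j ≠ 0` for some `i'`. -/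
def leLeft (B : BasedAlgebra I) : I → I → Prop :=
  Relation.ReflTransGen (fun j i => ∃ i', B.h i' i j ≠ 0)

/-- The preorder `⪯` on `I`, generated by:
`j ⪯ i` if `h i i' j ≠ 0` or `h i' i j ≠ 0` for some `i'`. -/
def leTwo (B : BasedAlgebra I) : I → I → Prop :=
  Relation.ReflTransGen (fun j i => ∃ i', B.h i i' j ≠ 0 ∨ B.h i' i j ≠ 0)

/-- The equivalence relation `∼_left` whose classes are the left cells. -/
def simLeft (B : BasedAlgebra I) (i j : I) : Prop := B.leLeft i j ∧ B.leLeft j i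

/-- The equivalence relation `∼` whose classes are the two-sided cells. -/
def simTwo (B : BasedAlgebra I) (i j : I) : Prop := B.leTwo i j ∧ B.leTwo j i

/-- `c` is a left cell. -/
def IsLeftCell (B : BasedAlgebra I) (c : Set I) : Prop := ∃ i, c = {j | B.simLeft j i}

/-- `c` is a two-sided cell. -/
def IsTwoCell (B : BasedAlgebra I) (c : Set I) : Prop := ∃ i, c = {j | B.simTwo j i}

/-- Lusztig's `a`-function: `a j` is the smallest `m : ℕ` such that
`h i i' j ∈ v^{-m} ℤ[v]` for all `i, i'`. -/
def af (B : BasedAlgebra I) (j : I) : ℕ :=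
  sInf {m : ℕ | ∀ i i' : I, ∀ n : ℤ, n < -(m : ℤ) → lcoeff (B.h i i' j) n = 0}

/-- The leading coefficients: `h i i' (j^!) = (hstar i i' j) v^{-a(j^!)} +` higher powers. -/
def hstar (B : BasedAlgebra I) (i i' j : I) : ℤ :=
  lcoeff (B.h i i' (B.einv j)) (-(B.af (B.einv j) : ℤ))

/-- The based algebra is *excellent* if properties Q1–Q11 of Lusztig (1.9) hold. -/
structure Excellent (B : BasedAlgebra I) : Prop where
  q1 : ∀ j ∈ B.I0, ∀ i i', B.hstar i i' j ≠ 0 → i' = B.einv i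
  q2 : ∀ i, ∃! j, j ∈ B.I0 ∧ B.hstar (B.einv i) i j ≠ 0
  q3 : ∀ i' i, B.leTwo i' i → B.af i ≤ B.af i'
  q4 : ∀ j ∈ B.I0, ∀ i, B.hstar (B.einv i) i j ≠ 0 → B.hstar (B.einv i) i j = 1
  q5 : ∀ i j k, B.hstar i j k = B.hstar j k i
  q6 : ∀ i j k, B.hstar i j k ≠ 0 →
    B.simLeft i (B.einv j) ∧ B.simLeft j (B.einv k) ∧ B.simLeft k (B.einv i)
  q7 : ∀ i' i, B.leLeft i' i → B.af i' = B.af i → B.simLeft i' i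
  q8 : ∀ i' i, B.leTwo i' i → B.af i' = B.af i → B.simTwo i' i
  q9a : ∀ i, ∃! j, j ∈ B.I0 ∧ B.simLeft j i
  q9b : ∀ i j, j ∈ B.I0 → B.simLeft j i → B.hstar (B.einv i) i j = 1
  q10 : ∀ i, B.simTwo i (B.einv i)
  q11 : ∀ i i' j k, B.af j = B.af k → ∀ p q : ℤ,
    ∑ j', lcoeff (B.h k i' j') p * lcoeff (B.h i j' j) q
      = ∑ j', lcoeff (B.h i k j') q * lcoeff (B.h j' i' j) p

/-- The multiplication of the asymptotic ring `𝔄^∞`, on coordinates with respect to the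
basis `{t_i}`: `t_i t_{i'} = ∑_j h*_{i,i',j^!} t_j`. -/
def tmul (B : BasedAlgebra I) (x y : I → ℤ) : I → ℤ :=
  fun j => ∑ i, ∑ i', x i * y i' * B.hstar i i' (B.einv j)

/-- The element `∑_{i ∈ I₀} t_i` of `𝔄^∞`. -/
def tone (B : BasedAlgebra I) : I → ℤ := fun i => if i ∈ B.I0 then 1 else 0

/-- The basis element `t_i` of `𝔄^∞`. -/
def tbasis (B : BasedAlgebra I) (i : I) : I → ℤ := fun j => if j = i then 1 else 0

end BasedAlgebra

/-!
Write `c i i' j = h*_{i,i',j^!}`, the coefficient of `v^{-a(j)}` in `h_{i,i',j}`. By Q6, `c i i' j ≠ 0`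
gives `i' ∼_left j` and `j^! ∼_left i^!`; as the `a`-function is constant on left cells (Q3) and
`!`-invariant (Q10), `a(i) = a(i') = a(j)`. In the
associativity identity `∑ₘ c i i' m c m i'' j = ∑ₘ c i' i'' m c i m j` only terms with
`a(m) = a(j) = a(i')` survive, and these are the `v^{-a(j)} v'^{-a(j)}`-coefficients of the two
sides of Q11 (with `k = i'`). For the unit, Q5 rotates `c d i j` into `h*_{i,j^!,d}`, and Q1, Q2, Q4
say that its sum over `d ∈ I₀` is `δ_{ij}`.
-/

section StructureConstants

variable {I : Type} [Fintype I]

def mulOfStructConst (c : I → I → I → ℤ) (x y : I → ℤ) : I → ℤ :=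
  fun j => ∑ i, ∑ i', x i * y i' * c i i' j

theorem mulOfStructConst_assoc {c : I → I → I → ℤ}
    (hc : ∀ a b d j, ∑ m, c a b m * c m d j = ∑ m, c b d m * c a m j) (x y z : I → ℤ) :
    mulOfStructConst c (mulOfStructConst c x y) z = mulOfStructConst c x (mulOfStructConst c y z) := by
  funext j
  calc mulOfStructConst c (mulOfStructConst c x y) z j
      = ∑ a, ∑ b, ∑ d, x a * y b * z d * ∑ m, c a b m * c m d j := by
        simp only [mulOfStructConst, sum_mul, mul_sum]
        rw [sum_comm_cycle]
        refine sum_congr rfl fun a _ => ?_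
        rw [sum_comm_cycle]
        refine sum_congr rfl fun b _ => ?_
        rw [sum_comm]
        exact sum_congr rfl fun d _ => sum_congr rfl fun m _ => by ring
    _ = ∑ a, ∑ b, ∑ d, x a * y b * z d * ∑ m, c b d m * c a m j := by simp only [hc]
    _ = mulOfStructConst c x (mulOfStructConst c y z) j := by
        simp only [mulOfStructConst, sum_mul, mul_sum]
        refine sum_congr rfl fun a _ => ?_
        rw [sum_comm_cycle]
        exact sum_congr rfl fun b _ => sum_congr rfl fun d _ => sum_congr rfl fun m _ => by ring

variable [DecidableEq I]

theorem mulOfStructConst_indicator_left {c : I → I → I → ℤ} {s : Finset I}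
    (hc : ∀ i j, ∑ d ∈ s, c d i j = if i = j then 1 else 0) (x : I → ℤ) :
    mulOfStructConst c (fun i => if i ∈ s then 1 else 0) x = x := by
  funext j
  calc ∑ d, ∑ i, (if d ∈ s then 1 else 0) * x i * c d i j = ∑ i, x i * ∑ d ∈ s, c d i j := by
        rw [sum_comm]
        simp only [ite_mul, one_mul, zero_mul, sum_ite_mem, univ_inter, mul_sum]
    _ = x j := by simp [hc]

theorem mulOfStructConst_indicator_right {c : I → I → I → ℤ} {s : Finset I}
    (hc : ∀ i j, ∑ d ∈ s, c i d j = if i = j then 1 else 0) (x : I → ℤ) :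
    mulOfStructConst c x (fun i => if i ∈ s then 1 else 0) = x := by
  funext j
  calc ∑ i, ∑ d, x i * (if d ∈ s then 1 else 0) * c i d j = ∑ i, x i * ∑ d ∈ s, c i d j := by
        simp only [mul_ite, mul_one, mul_zero, ite_mul, zero_mul, sum_ite_mem, univ_inter, mul_sum]
    _ = x j := by simp [hc]

end StructureConstants

namespace BasedAlgebra

variable {I : Type} [Fintype I] [DecidableEq I] {B : BasedAlgebra I}

theorem tmul_eq_mulOfStructConst (B : BasedAlgebra I) :
    B.tmul = mulOfStructConst fun i i' j => B.hstar i i' (B.einv j) := rfl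

theorem hstar_einv (B : BasedAlgebra I) (i i' j : I) :
    B.hstar i i' (B.einv j) = lcoeff (B.h i i' j) (-(B.af j : ℤ)) := by
  rw [hstar, B.einv_invol]

theorem leTwo_of_leLeft {i j : I} (h : B.leLeft i j) : B.leTwo i j :=
  Relation.ReflTransGen.mono (fun _ _ ⟨i', hi⟩ => ⟨i', Or.inr hi⟩) _ _ h

namespace Excellent

theorem af_eq_of_simLeft (hB : B.Excellent) {i j : I} (h : B.simLeft i j) : B.af i = B.af j :=
  le_antisymm (hB.q3 j i (leTwo_of_leLeft h.2)) (hB.q3 i j (leTwo_of_leLeft h.1))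

theorem af_einv (hB : B.Excellent) (i : I) : B.af (B.einv i) = B.af i :=
  le_antisymm (hB.q3 i (B.einv i) (hB.q10 i).1) (hB.q3 (B.einv i) i (hB.q10 i).2)

theorem af_eq_of_hstar_ne_zero (hB : B.Excellent) {i i' j : I} (h : B.hstar i i' (B.einv j) ≠ 0) :
    B.af i = B.af j ∧ B.af i' = B.af j := by
  obtain ⟨-, hi', hj⟩ := hB.q6 _ _ _ h
  rw [B.einv_invol] at hi'
  refine ⟨?_, hB.af_eq_of_simLeft hi'⟩
  rw [← hB.af_einv i, ← hB.af_einv j]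
  exact (hB.af_eq_of_simLeft hj).symm

theorem sum_hstar_mul_hstar (hB : B.Excellent) (i i' i'' j : I) :
    ∑ m, B.hstar i i' (B.einv m) * B.hstar m i'' (B.einv j)
      = ∑ m, B.hstar i' i'' (B.einv m) * B.hstar i m (B.einv j) := by
  by_cases ha : B.af j = B.af i'
  · -- each nonzero term has `a(m) = a(j)`, so it is the corresponding term of Q11
    convert (hB.q11 i i'' j i' ha (-(B.af j : ℤ)) (-(B.af j : ℤ))).symm using 2 with m _ m _
    · by_cases hz : B.hstar m i'' (B.einv j) = 0
      · rw [hz, ← B.hstar_einv, hz, mul_zero, mul_zero]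
      · rw [B.hstar_einv, B.hstar_einv, (hB.af_eq_of_hstar_ne_zero hz).1]
    · by_cases hz : B.hstar i m (B.einv j) = 0
      · rw [hz, ← B.hstar_einv, hz, mul_zero, mul_zero]
      · rw [B.hstar_einv, B.hstar_einv, (hB.af_eq_of_hstar_ne_zero hz).2]
  · -- a nonzero term on either side would force `a(i') = a(m) = a(j)`
    rw [sum_eq_zero fun m _ => ?_, sum_eq_zero fun m _ => ?_]
    all_goals
      by_contra hne
      obtain ⟨h₁, h₂⟩ := mul_ne_zero_iff.mp hne
      have := hB.af_eq_of_hstar_ne_zero h₁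
      have := hB.af_eq_of_hstar_ne_zero h₂
      omega

theorem sum_I0_hstar (hB : B.Excellent) (i j : I) :
    ∑ d ∈ B.I0, B.hstar i (B.einv j) d = if i = j then 1 else 0 := by
  split_ifs with hij
  · subst hij
    obtain ⟨d₀, ⟨hd₀, hne⟩, huniq⟩ := hB.q2 (B.einv i)
    rw [B.einv_invol] at hne huniq
    rw [sum_eq_single_of_mem d₀ hd₀ fun d hd hdne => by_contra fun hc => hdne (huniq d ⟨hd, hc⟩)]
    simpa only [B.einv_invol] using hB.q4 d₀ hd₀ (B.einv i) (by rwa [B.einv_invol])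
  · refine sum_eq_zero fun d hd => by_contra fun hc => hij ?_
    simpa only [B.einv_invol] using congrArg B.einv (hB.q1 d hd i (B.einv j) hc).symm

theorem sum_I0_hstar_left (hB : B.Excellent) (i j : I) :
    ∑ d ∈ B.I0, B.hstar d i (B.einv j) = if i = j then 1 else 0 := by
  rw [← hB.sum_I0_hstar]
  exact sum_congr rfl fun d _ => hB.q5 d i (B.einv j)

theorem sum_I0_hstar_right (hB : B.Excellent) (i j : I) :
    ∑ d ∈ B.I0, B.hstar i d (B.einv j) = if i = j then 1 else 0 := by
  calc ∑ d ∈ B.I0, B.hstar i d (B.einv j)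
      = ∑ d ∈ B.I0, B.hstar (B.einv j) (B.einv (B.einv i)) d :=
        sum_congr rfl fun d _ => by rw [B.einv_invol, hB.q5, hB.q5]
    _ = if i = j then 1 else 0 := by
        simp only [hB.sum_I0_hstar, (Function.Involutive.injective B.einv_invol).eq_iff, eq_comm]

end Excellent

end BasedAlgebra

/-- Lusztig 1.9. For an excellent based `A`-algebra `𝔄`, the
`ℤ`-bilinear product on the free abelian group with basis `{t_i : i ∈ I}` given by
`t_i t_{i'} = ∑_j h*_{i,i',j^!} t_j` is associative, and `∑_{i ∈ I₀} t_i` is a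
(two-sided) unit for it; thus it is an associative unital ring, the asymptotic
ring `𝔄^∞`. -/
theorem statement0 {I : Type} [Fintype I] [DecidableEq I]
    (B : BasedAlgebra I) (hB : B.Excellent) :
    (∀ x y z : I → ℤ, B.tmul (B.tmul x y) z = B.tmul x (B.tmul y z)) ∧
    (∀ x : I → ℤ, B.tmul B.tone x = x ∧ B.tmul x B.tone = x) := by
  rw [BasedAlgebra.tmul_eq_mulOfStructConst]
  exact ⟨mulOfStructConst_assoc hB.sum_hstar_mul_hstar, fun x =>
    ⟨mulOfStructConst_indicator_left hB.sum_I0_hstar_left x,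
      mulOfStructConst_indicator_right hB.sum_I0_hstar_right x⟩⟩
end
end

section
/- Let k be an algebraically closed field of characteristic 0, V a finite-dimensional k-vector space, H a finite subgroup of GL(V), and K a normal subgroup of H. Let E be an irreducible K-module (over k) which is univalent, i.e. dim Hom_K(E, S^{b_E}V) = 1. Then there exists an irreducible H-module E' such that E occurs in the restriction of E' to K and b_{E'} = b_E; moreover, E' is uniquely determined up to isomorphism by these two properties, and E' is univalent, i.e. dim Hom_H(E', S^{b_{E'}}V) = 1. -/
open scoped Classical
open MvPolynomial

noncomputable section

/-- The `i`-th symmetric power `S^iV` of `V = ⊕_ι k`: the degree-`i` homogeneous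
component of the polynomial algebra `SV = k[x_j : j ∈ ι]`. -/
def SymPow (ι k : Type) [CommSemiring k] (i : ℕ) : Type :=
  ↥(homogeneousSubmodule ι k i)

instance (ι k : Type) [CommRing k] (i : ℕ) : AddCommGroup (SymPow ι k i) :=
  inferInstanceAs (AddCommGroup ↥(homogeneousSubmodule ι k i))

instance (ι k : Type) [CommRing k] (i : ℕ) : Module k (SymPow ι k i) :=
  inferInstanceAs (Module k ↥(homogeneousSubmodule ι k i))

/-- The space of `G`-equivariant `k`-linear maps `X → Y`, for families of endomorphisms
`rX`, `rY` indexed by `G`. -/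
def equivSub (k : Type) [Field k] (G : Type) {X Y : Type} [AddCommGroup X] [Module k X]
    [AddCommGroup Y] [Module k Y] (rX : G → (X →ₗ[k] X)) (rY : G → (Y →ₗ[k] Y)) :
    Submodule k (X →ₗ[k] Y) where
  carrier := {f | ∀ g, f.comp (rX g) = (rY g).comp f}
  add_mem' := by
    intro f g hf hg s
    simp only [LinearMap.add_comp, LinearMap.comp_add, hf s, hg s]
  zero_mem' := by
    intro s
    simp
  smul_mem' := by
    intro c f hf s
    simp only [LinearMap.smul_comp, LinearMap.comp_smul, hf s]

/-- `r` is a linear action of the monoid `G` on `X`. -/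
def IsAction (G : Type) [Monoid G] {k X : Type} [Field k] [AddCommGroup X] [Module k X]
    (r : G → (X →ₗ[k] X)) : Prop :=
  r 1 = LinearMap.id ∧ ∀ g g', r (g * g') = (r g).comp (r g')

/-- The linear action `r` of `G` on `X` is irreducible: `X ≠ 0` and the only invariant
subspaces are `⊥` and `⊤`. -/
def IsIrred (k : Type) [Field k] (G : Type) {X : Type} [AddCommGroup X] [Module k X]
    (r : G → (X →ₗ[k] X)) : Prop :=
  Nontrivial X ∧ ∀ p : Submodule k X, (∀ g, ∀ x ∈ p, r g x ∈ p) → p = ⊥ ∨ p = ⊤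

/-- `rho` is an action of the monoid `W` on the symmetric algebra
`SV = k[x_j : j ∈ ι]` of `V = ⊕_ι k` by algebra automorphisms. -/
def IsAlgAction (W : Type) [Monoid W] {k ι : Type} [CommSemiring k]
    (rho : W → (MvPolynomial ι k ≃ₐ[k] MvPolynomial ι k)) : Prop :=
  (∀ p, rho 1 p = p) ∧ ∀ g g' p, rho (g * g') p = rho g (rho g' p)

/-- The action of `W` on the `i`-th symmetric power `S^iV`, induced by a
degree-preserving action `rho` on the symmetric algebra. -/
def srepFun {k ι W : Type} [Field k] [Fintype ι]
    (rho : W → (MvPolynomial ι k ≃ₐ[k] MvPolynomial ι k))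
    (hdeg : ∀ (g : W) (i : ℕ) (p : MvPolynomial ι k),
      p.IsHomogeneous i → (rho g p).IsHomogeneous i)
    (i : ℕ) (g : W) :
    SymPow ι k i →ₗ[k] SymPow ι k i :=
  LinearMap.restrict (rho g).toLinearMap (p := homogeneousSubmodule ι k i)
    (q := homogeneousSubmodule ι k i) (fun x hx => by
      rw [mem_homogeneousSubmodule] at hx ⊢
      exact hdeg g i x hx)

/-!
Fix a nonzero `K`-map `φ : E → S^{b_E}V`; by univalence every `K`-map `E → S^{b_E}V` is a
multiple of `φ`. Let `E'` be the `H`-submodule generated by the image of `φ`. For an `H`-stable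
`W ≤ E'`, Maschke gives an `H`-equivariant projection `π` onto `W`, and `π ∘ φ = c • φ`: if
`c = 0` then `π` kills `E'`, so `W = 0`, otherwise `W` contains the image of `φ`, so `W = E'`.
Hence `E'` is irreducible, so a nonzero `H`-map out of `E'` stays nonzero on the copy of `E`;
this gives `b_{E'} = b_E` and univalence of `E'`. If `E''` is irreducible, contains `E` via `ψ`
and maps to `S^{b_E}V` by a nonzero `H`-map `f`, then `f ∘ ψ` is a nonzero multiple of `φ`,
which forces `f(E'') = E'`.
-/

namespace Submodule

variable {k X : Type} [Field k] [AddCommGroup X] [Module k X]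

def IsInvariant {G : Type} (W : Submodule k X) (r : G → (X →ₗ[k] X)) : Prop :=
  ∀ g, ∀ x ∈ W, r g x ∈ W

theorem finrank_eq_one_iff_of_mem {P : Submodule k X} {v : X} (hv : v ∈ P) (hv0 : v ≠ 0) :
    Module.finrank k P = 1 ↔ ∀ w ∈ P, ∃ c : k, c • v = w := by
  rw [finrank_eq_one_iff_of_nonzero' (⟨v, hv⟩ : P) (by simpa using hv0)]
  refine ⟨fun h w hw => ?_, fun h w => ?_⟩
  · obtain ⟨c, hc⟩ := h ⟨w, hw⟩
    exact ⟨c, congrArg Subtype.val hc⟩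
  · obtain ⟨c, hc⟩ := h w w.2
    exact ⟨c, Subtype.ext hc⟩

def invariantSpan {G : Type} (W : Submodule k X) (r : G → (X →ₗ[k] X)) : Submodule k X :=
  ⨆ g, W.map (r g)

variable {G : Type} {W Q : Submodule k X} {r : G → (X →ₗ[k] X)}

theorem invariantSpan_le (hWQ : W ≤ Q) (hQ : Q.IsInvariant r) : W.invariantSpan r ≤ Q :=
  iSup_le fun g => by
    rintro _ ⟨x, hx, rfl⟩
    exact hQ g x (hWQ hx)

instance [Finite G] [FiniteDimensional k W] : FiniteDimensional k (W.invariantSpan r) :=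
  Submodule.finiteDimensional_iSup _

end Submodule

section Equivariant

variable {k G X Y Z : Type} [Field k] [AddCommGroup X] [Module k X] [AddCommGroup Y]
  [Module k Y] [AddCommGroup Z] [Module k Z]
  {rX : G → (X →ₗ[k] X)} {rY : G → (Y →ₗ[k] Y)} {rZ : G → (Z →ₗ[k] Z)}

theorem map_apply_of_mem_equivSub {f : X →ₗ[k] Y} (hf : f ∈ equivSub k G rX rY) (g : G) (x : X) :
    f (rX g x) = rY g (f x) :=
  LinearMap.congr_fun (hf g) x

theorem comp_mem_equivSub {f : Y →ₗ[k] Z} {ψ : X →ₗ[k] Y} (hf : f ∈ equivSub k G rY rZ)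
    (hψ : ψ ∈ equivSub k G rX rY) : f ∘ₗ ψ ∈ equivSub k G rX rZ := fun g => by
  rw [LinearMap.comp_assoc, hψ g, ← LinearMap.comp_assoc, hf g, LinearMap.comp_assoc]

theorem mem_equivSub_comp {K : Type} (j : K → G) {f : X →ₗ[k] Y}
    (hf : f ∈ equivSub k G rX rY) : f ∈ equivSub k K (fun g => rX (j g)) (fun g => rY (j g)) :=
  fun g => hf (j g)

theorem ker_isInvariant_of_mem_equivSub {f : X →ₗ[k] Y} (hf : f ∈ equivSub k G rX rY) :
    (LinearMap.ker f).IsInvariant rX := fun g x hx => by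
  rw [LinearMap.mem_ker] at hx ⊢
  rw [map_apply_of_mem_equivSub hf, hx, map_zero]

theorem range_isInvariant_of_mem_equivSub {f : X →ₗ[k] Y} (hf : f ∈ equivSub k G rX rY) :
    (LinearMap.range f).IsInvariant rY := by
  rintro g _ ⟨x, rfl⟩
  exact ⟨rX g x, map_apply_of_mem_equivSub hf g x⟩

theorem comap_isInvariant_of_mem_equivSub {f : X →ₗ[k] Y} (hf : f ∈ equivSub k G rX rY)
    {Q : Submodule k Y} (hQ : Q.IsInvariant rY) : (Q.comap f).IsInvariant rX := fun g x hx => by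
  rw [Submodule.mem_comap, map_apply_of_mem_equivSub hf]
  exact hQ g _ hx

theorem exists_mem_equivSub_comp_eq_of_range_le {ι : Y →ₗ[k] X} (hι : Function.Injective ι)
    (hιmem : ι ∈ equivSub k G rY rX) {φ : Z →ₗ[k] X} (hφ : φ ∈ equivSub k G rZ rX)
    (hle : LinearMap.range φ ≤ LinearMap.range ι) :
    ∃ ψ ∈ equivSub k G rZ rY, ι ∘ₗ ψ = φ := by
  obtain ⟨ι', hι'⟩ := ι.exists_leftInverse_of_injective (LinearMap.ker_eq_bot.mpr hι)
  have hφι : ∀ z, ι (ι' (φ z)) = φ z := fun z => by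
    obtain ⟨y, hy⟩ := hle ⟨z, rfl⟩
    rw [← hy, ← LinearMap.comp_apply ι' ι, hι', LinearMap.id_apply]
  refine ⟨ι' ∘ₗ φ, fun g => LinearMap.ext fun z => hι ?_, LinearMap.ext hφι⟩
  simp only [LinearMap.comp_apply]
  rw [hφι, map_apply_of_mem_equivSub hφ, map_apply_of_mem_equivSub hιmem, hφι]

theorem exists_linearEquiv_mem_equivSub_of_range_eq {u : Y →ₗ[k] X} {v : Z →ₗ[k] X}
    (hu : Function.Injective u) (hv : Function.Injective v) (humem : u ∈ equivSub k G rY rX)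
    (hvmem : v ∈ equivSub k G rZ rX) (huv : LinearMap.range u = LinearMap.range v) :
    ∃ e : Y ≃ₗ[k] Z, e.toLinearMap ∈ equivSub k G rY rZ := by
  let e := (LinearEquiv.ofInjective u hu).trans
    ((LinearEquiv.ofEq _ _ huv).trans (LinearEquiv.ofInjective v hv).symm)
  have hve : ∀ y, v (e y) = u y := fun y => by simp [e]
  refine ⟨e, fun g => LinearMap.ext fun y => hv ?_⟩
  simp only [LinearMap.comp_apply, LinearEquiv.coe_coe]
  rw [hve, map_apply_of_mem_equivSub humem, map_apply_of_mem_equivSub hvmem, hve]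

end Equivariant

namespace IsAction

variable {k G X Y : Type} [Field k] [AddCommGroup X] [Module k X] [AddCommGroup Y] [Module k Y]

section Monoid

variable [Monoid G] {r : G → (X →ₗ[k] X)}

theorem one_apply (hr : IsAction G r) (x : X) : r 1 x = x := by
  rw [hr.1, LinearMap.id_apply]

theorem mul_apply (hr : IsAction G r) (g g' : G) (x : X) : r (g * g') x = r g (r g' x) := by
  rw [hr.2, LinearMap.comp_apply]

theorem of_injective (hr : IsAction G r) {s : G → (Y →ₗ[k] Y)} {ι : Y →ₗ[k] X}
    (hι : Function.Injective ι) (hιmem : ι ∈ equivSub k G s r) : IsAction G s := by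
  refine ⟨LinearMap.ext fun y => hι ?_, fun g g' => LinearMap.ext fun y => hι ?_⟩
  · rw [map_apply_of_mem_equivSub hιmem, hr.one_apply, LinearMap.id_apply]
  · simp only [LinearMap.comp_apply, map_apply_of_mem_equivSub hιmem, hr.mul_apply]

theorem le_invariantSpan (hr : IsAction G r) (W : Submodule k X) : W ≤ W.invariantSpan r := by
  have h := le_iSup (fun g => W.map (r g)) 1
  rwa [hr.1, Submodule.map_id] at h

theorem invariantSpan_isInvariant (hr : IsAction G r) (W : Submodule k X) :
    (W.invariantSpan r).IsInvariant r := by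
  have hmap : ∀ g, (W.invariantSpan r).map (r g) ≤ W.invariantSpan r := fun g => by
    rw [Submodule.invariantSpan, Submodule.map_iSup]
    refine iSup_le fun g' => ?_
    rw [← Submodule.map_comp, ← hr.2]
    exact le_iSup (fun g'' => W.map (r g'')) (g * g')
  exact fun g x hx => hmap g ⟨x, hx, rfl⟩

end Monoid

variable [Group G] {r : G → (X →ₗ[k] X)}

theorem apply_inv_apply (hr : IsAction G r) (g : G) (x : X) : r g (r g⁻¹ x) = x := by
  rw [← hr.mul_apply, mul_inv_cancel, hr.one_apply]

theorem inv_apply_apply (hr : IsAction G r) (g : G) (x : X) : r g⁻¹ (r g x) = x := by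
  rw [← hr.mul_apply, inv_mul_cancel, hr.one_apply]

/-- Maschke: average an arbitrary projection onto `W` over the finite group. -/
theorem exists_projection_mem_equivSub [Fintype G] [CharZero k] (hr : IsAction G r)
    {W : Submodule k X} (hW : W.IsInvariant r) :
    ∃ π : X →ₗ[k] X, (∀ x, π x ∈ W) ∧ (∀ x ∈ W, π x = x) ∧ π ∈ equivSub k G r r := by
  obtain ⟨W', hc⟩ := Submodule.exists_isCompl W
  let p : X →ₗ[k] X := W.subtype ∘ₗ W.projectionOnto W' hc
  have hpW : ∀ x, p x ∈ W := fun x => (W.projectionOnto W' hc x).2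
  have hp_fix : ∀ x ∈ W, p x = x := fun x hx => by
    simp [p, Submodule.projectionOnto_apply_left hc ⟨x, hx⟩]
  refine ⟨(Fintype.card G : k)⁻¹ • ∑ g : G, r g ∘ₗ p ∘ₗ r g⁻¹, fun x => ?_, fun x hx => ?_,
    fun h => LinearMap.ext fun x => ?_⟩
  · simp only [LinearMap.smul_apply, LinearMap.sum_apply, LinearMap.comp_apply]
    exact W.smul_mem _ (W.sum_mem fun g _ => hW g _ (hpW _))
  · simp only [LinearMap.smul_apply, LinearMap.sum_apply, LinearMap.comp_apply,
      hp_fix _ (hW _ x hx), hr.apply_inv_apply, Finset.sum_const, Finset.card_univ]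
    rw [← Nat.cast_smul_eq_nsmul k, smul_smul,
      inv_mul_cancel₀ (Nat.cast_ne_zero.mpr Fintype.card_ne_zero), one_smul]
  · simp only [LinearMap.comp_apply, LinearMap.smul_apply, LinearMap.sum_apply, map_smul,
      map_sum]
    congr 1
    rw [← Equiv.sum_comp (Equiv.mulLeft h)]
    refine Finset.sum_congr rfl fun g _ => ?_
    simp only [Equiv.coe_mulLeft, mul_inv_rev, hr.mul_apply, hr.inv_apply_apply]

theorem exists_fin_model (hr : IsAction G r) {W : Submodule k X}
    [FiniteDimensional k W] (hW : W.IsInvariant r) :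
    ∃ (n : ℕ) (s : G → ((Fin n → k) →ₗ[k] (Fin n → k))) (ι : (Fin n → k) →ₗ[k] X),
      IsAction G s ∧ ι ∈ equivSub k G s r ∧ Function.Injective ι ∧ LinearMap.range ι = W := by
  let e : W ≃ₗ[k] (Fin (Module.finrank k W) → k) := (Module.finBasis k W).equivFun
  let s : G → ((Fin _ → k) →ₗ[k] (Fin _ → k)) :=
    fun g => e.toLinearMap ∘ₗ (r g).restrict (hW g) ∘ₗ e.symm.toLinearMap
  let ι := W.subtype ∘ₗ e.symm.toLinearMap
  have hι : Function.Injective ι := W.injective_subtype.comp e.symm.injective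
  have hιmem : ι ∈ equivSub k G s r := fun g => LinearMap.ext fun x => by
    simp [ι, s, LinearMap.restrict_apply]
  refine ⟨_, s, ι, hr.of_injective hι hιmem, hιmem, hι, ?_⟩
  rw [LinearMap.range_comp, LinearEquiv.range, Submodule.map_top, Submodule.range_subtype]

end IsAction

namespace IsIrred

variable {k G X Y Z : Type} [Field k] [AddCommGroup X] [Module k X] [AddCommGroup Y]
  [Module k Y] [AddCommGroup Z] [Module k Z]
  {rX : G → (X →ₗ[k] X)} {rY : G → (Y →ₗ[k] Y)} {f : X →ₗ[k] Y}

theorem injective_of_mem_equivSub (hirr : IsIrred k G rX) (hf : f ∈ equivSub k G rX rY)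
    (hf0 : f ≠ 0) : Function.Injective f := by
  rw [← LinearMap.ker_eq_bot]
  exact (hirr.2 _ (ker_isInvariant_of_mem_equivSub hf)).resolve_right
    fun h => hf0 (LinearMap.ker_eq_top.mp h)

theorem comp_ne_zero (hirr : IsIrred k G rX) (hf : f ∈ equivSub k G rX rY) (hf0 : f ≠ 0)
    {ψ : Z →ₗ[k] X} (hψ0 : ψ ≠ 0) : f ∘ₗ ψ ≠ 0 := by
  intro h
  refine hψ0 (LinearMap.ext fun z => hirr.injective_of_mem_equivSub hf hf0 ?_)
  rw [LinearMap.zero_apply, map_zero, ← LinearMap.comp_apply, h, LinearMap.zero_apply]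

theorem range_le_of_apply_mem (hirr : IsIrred k G rX) (hf : f ∈ equivSub k G rX rY)
    {Q : Submodule k Y} (hQ : Q.IsInvariant rY) {x : X} (hx0 : x ≠ 0) (hfx : f x ∈ Q) :
    LinearMap.range f ≤ Q := by
  refine LinearMap.range_le_iff_comap.mpr
    ((hirr.2 _ (comap_isInvariant_of_mem_equivSub hf hQ)).resolve_left fun h => hx0 ?_)
  rwa [← Submodule.mem_bot k, ← h]

end IsIrred

theorem isIrred_of_injective {k G X Y : Type} [Field k] [AddCommGroup X] [Module k X]
    [AddCommGroup Y] [Module k Y] {r : G → (X →ₗ[k] X)} {s : G → (Y →ₗ[k] Y)}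
    {ι : Y →ₗ[k] X} (hι : Function.Injective ι) (hιmem : ι ∈ equivSub k G s r)
    (hne : LinearMap.range ι ≠ ⊥)
    (hmin : ∀ W : Submodule k X, W.IsInvariant r → W ≤ LinearMap.range ι →
      W = ⊥ ∨ W = LinearMap.range ι) :
    IsIrred k G s := by
  refine ⟨?_, fun p hp => ?_⟩
  · by_contra h
    rw [not_nontrivial_iff_subsingleton] at h
    exact hne (LinearMap.range_eq_bot.mpr (LinearMap.ext fun y => by
      rw [Subsingleton.elim y 0, map_zero, LinearMap.zero_apply]))
  · have hmap : (p.map ι).IsInvariant r := by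
      rintro g _ ⟨y, hy, rfl⟩
      exact ⟨s g y, hp g y hy, map_apply_of_mem_equivSub hιmem g y⟩
    rcases hmin _ hmap LinearMap.map_le_range with h | h
    · exact Or.inl (Submodule.map_injective_of_injective hι (by rw [h, Submodule.map_bot]))
    · exact Or.inr (Submodule.map_injective_of_injective hι (by rw [h, Submodule.map_top]))

theorem IsAlgAction.isAction_srepFun {k ι H : Type} [Field k] [Fintype ι] [Monoid H]
    {rho : H → (MvPolynomial ι k ≃ₐ[k] MvPolynomial ι k)} (hact : IsAlgAction H rho)
    (hdeg : ∀ (g : H) (i : ℕ) (p : MvPolynomial ι k),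
      p.IsHomogeneous i → (rho g p).IsHomogeneous i) (i : ℕ) :
    IsAction H (srepFun rho hdeg i) :=
  ⟨LinearMap.ext fun x => Subtype.ext (hact.1 x.1),
    fun g g' => LinearMap.ext fun x => Subtype.ext (hact.2 g g' x.1)⟩

section Univalent

variable {k G M E Y : Type} [Field k] [Group G] [AddCommGroup M] [Module k M]
  [AddCommGroup E] [Module k E] [AddCommGroup Y] [Module k Y]
  {S : G → (M →ₗ[k] M)} {K : Subgroup G} {rE : K → (E →ₗ[k] E)} {φ : E →ₗ[k] M}

theorem eq_bot_or_eq_invariantSpan_range [Fintype G] [CharZero k] (hS : IsAction G S)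
    (hφ : φ ∈ equivSub k K rE (fun g => S g)) (hφ0 : φ ≠ 0)
    (huni : Module.finrank k (equivSub k K rE (fun g => S g)) = 1)
    {W : Submodule k M} (hW : W.IsInvariant S)
    (hWle : W ≤ (LinearMap.range φ).invariantSpan S) :
    W = ⊥ ∨ W = (LinearMap.range φ).invariantSpan S := by
  obtain ⟨π, hπW, hπ_fix, hπ⟩ := hS.exists_projection_mem_equivSub hW
  obtain ⟨c, hc⟩ := (Submodule.finrank_eq_one_iff_of_mem hφ hφ0).mp huni (π ∘ₗ φ)
    (comp_mem_equivSub (mem_equivSub_comp Subtype.val hπ) hφ)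
  have hπφ : ∀ y, π (φ y) = c • φ y := fun y => by
    rw [← LinearMap.comp_apply, ← hc, LinearMap.smul_apply]
  by_cases hc0 : c = 0
  · left
    have hker : (LinearMap.range φ).invariantSpan S ≤ LinearMap.ker π := by
      refine Submodule.invariantSpan_le ?_ (ker_isInvariant_of_mem_equivSub hπ)
      rintro _ ⟨y, rfl⟩
      rw [LinearMap.mem_ker, hπφ, hc0, zero_smul]
    refine eq_bot_iff.mpr fun x hx => ?_
    rw [Submodule.mem_bot, ← hπ_fix x hx]
    exact hker (hWle hx)
  · right
    refine le_antisymm hWle (Submodule.invariantSpan_le ?_ hW)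
    rintro _ ⟨y, rfl⟩
    rw [← inv_smul_smul₀ hc0 (φ y), ← hπφ]
    exact W.smul_mem _ (hπW _)

theorem finrank_equivSub_eq_one {s : G → (Y →ₗ[k] Y)} (hirr : IsIrred k G s)
    (hφ : φ ∈ equivSub k K rE (fun g => S g)) (hφ0 : φ ≠ 0)
    (huni : Module.finrank k (equivSub k K rE (fun g => S g)) = 1)
    {ι : Y →ₗ[k] M} (hιmem : ι ∈ equivSub k G s S) (hι0 : ι ≠ 0) {ψ : E →ₗ[k] Y}
    (hψ : ψ ∈ equivSub k K rE (fun g => s g)) (hψ0 : ψ ≠ 0) (hιψ : ι ∘ₗ ψ = φ) :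
    Module.finrank k (equivSub k G s S) = 1 := by
  refine (Submodule.finrank_eq_one_iff_of_mem hιmem hι0).mpr fun f hf => ?_
  obtain ⟨c, hc⟩ := (Submodule.finrank_eq_one_iff_of_mem hφ hφ0).mp huni (f ∘ₗ ψ)
    (comp_mem_equivSub (mem_equivSub_comp Subtype.val hf) hψ)
  refine ⟨c, sub_eq_zero.mp (by_contra fun hne => hirr.comp_ne_zero
    (Submodule.sub_mem _ (Submodule.smul_mem _ c hιmem) hf) hne hψ0 ?_)⟩
  rw [LinearMap.sub_comp, LinearMap.smul_comp, hιψ, hc, sub_self]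

theorem range_eq_invariantSpan_range (hS : IsAction G S)
    (hφ : φ ∈ equivSub k K rE (fun g => S g)) (hφ0 : φ ≠ 0)
    (huni : Module.finrank k (equivSub k K rE (fun g => S g)) = 1)
    {s : G → (Y →ₗ[k] Y)} (hirr : IsIrred k G s) {ψ : E →ₗ[k] Y}
    (hψ : ψ ∈ equivSub k K rE (fun g => s g)) (hψ0 : ψ ≠ 0)
    {f : Y →ₗ[k] M} (hf : f ∈ equivSub k G s S) (hf0 : f ≠ 0) :
    LinearMap.range f = (LinearMap.range φ).invariantSpan S := by
  obtain ⟨c, hc⟩ := (Submodule.finrank_eq_one_iff_of_mem hφ hφ0).mp huni (f ∘ₗ ψ)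
    (comp_mem_equivSub (mem_equivSub_comp Subtype.val hf) hψ)
  have hc0 : c ≠ 0 := by
    rintro rfl
    exact hirr.comp_ne_zero hf hf0 hψ0 (by rw [← hc, zero_smul])
  have hfψ : ∀ y, f (ψ y) = c • φ y := fun y => by
    rw [← LinearMap.comp_apply, ← hc, LinearMap.smul_apply]
  obtain ⟨y, hy⟩ := DFunLike.ne_iff.mp hψ0
  refine le_antisymm (hirr.range_le_of_apply_mem hf (hS.invariantSpan_isInvariant _) hy ?_) ?_
  · rw [hfψ]
    exact Submodule.smul_mem _ c (hS.le_invariantSpan _ ⟨y, rfl⟩)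
  · refine Submodule.invariantSpan_le ?_ (range_isInvariant_of_mem_equivSub hf)
    rintro _ ⟨y, rfl⟩
    exact ⟨c⁻¹ • ψ y, by rw [map_smul, hfψ, inv_smul_smul₀ hc0]⟩

end Univalent

theorem statement15_general {k ι H : Type} [Field k] [CharZero k]
    [Fintype ι] [Group H] [Fintype H]
    (rho : H → (MvPolynomial ι k ≃ₐ[k] MvPolynomial ι k))
    (hact : IsAlgAction H rho)
    (hdeg : ∀ (g : H) (i : ℕ) (p : MvPolynomial ι k),
      p.IsHomogeneous i → (rho g p).IsHomogeneous i)
    (K : Subgroup H)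
    {E : Type} [AddCommGroup E] [Module k E] [FiniteDimensional k E]
    (rE : ↥K → (E →ₗ[k] E))
    (bE : ℕ)
    (hbE : IsLeast {i | equivSub k ↥K rE (fun g : ↥K => srepFun rho hdeg i (g : H)) ≠ ⊥} bE)
    (huni : Module.finrank k
      ↥(equivSub k ↥K rE (fun g : ↥K => srepFun rho hdeg bE (g : H))) = 1) :
    ∃ (n : ℕ) (rE' : H → ((Fin n → k) →ₗ[k] (Fin n → k))),
      IsAction H rE' ∧ IsIrred k H rE' ∧
      equivSub k ↥K rE (fun g : ↥K => rE' (g : H)) ≠ ⊥ ∧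
      IsLeast {i | equivSub k H rE' (srepFun rho hdeg i) ≠ ⊥} bE ∧
      Module.finrank k ↥(equivSub k H rE' (srepFun rho hdeg bE)) = 1 ∧
      ∀ (m : ℕ) (rE'' : H → ((Fin m → k) →ₗ[k] (Fin m → k))),
        IsAction H rE'' → IsIrred k H rE'' →
        equivSub k ↥K rE (fun g : ↥K => rE'' (g : H)) ≠ ⊥ →
        IsLeast {i | equivSub k H rE'' (srepFun rho hdeg i) ≠ ⊥} bE →
        ∃ e : (Fin n → k) ≃ₗ[k] (Fin m → k),
          ∀ g : H, (e.toLinearMap).comp (rE' g) = (rE'' g).comp e.toLinearMap := by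
  have hS := hact.isAction_srepFun hdeg bE
  obtain ⟨φ, hφ, hφ0⟩ := Submodule.exists_mem_ne_zero_of_ne_bot hbE.1
  have hE'ne : (LinearMap.range φ).invariantSpan (srepFun rho hdeg bE) ≠ ⊥ := fun h =>
    hφ0 (LinearMap.range_eq_bot.mp (eq_bot_iff.mpr (h ▸ hS.le_invariantSpan _)))
  obtain ⟨n, rE', ι, hrE', hιmem, hι, hιE'⟩ :=
    hS.exists_fin_model (hS.invariantSpan_isInvariant (LinearMap.range φ))
  have hirrE' : IsIrred k H rE' := isIrred_of_injective hι hιmem (hιE' ▸ hE'ne)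
    fun W hW hWle => hιE' ▸ eq_bot_or_eq_invariantSpan_range hS hφ hφ0 huni hW (hιE' ▸ hWle)
  obtain ⟨ψ, hψ, hιψ⟩ := exists_mem_equivSub_comp_eq_of_range_le hι
    (mem_equivSub_comp Subtype.val hιmem) hφ (hιE' ▸ hS.le_invariantSpan _)
  have hψ0 : ψ ≠ 0 := by
    rintro rfl
    exact hφ0 (by rw [← hιψ, LinearMap.comp_zero])
  have hι0 : ι ≠ 0 := by
    rintro rfl
    exact hφ0 (by rw [← hιψ, LinearMap.zero_comp])
  refine ⟨n, rE', hrE', hirrE', (Submodule.ne_bot_iff _).mpr ⟨ψ, hψ, hψ0⟩,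
    ⟨(Submodule.ne_bot_iff _).mpr ⟨ι, hιmem, hι0⟩, fun i hi => ?_⟩,
    finrank_equivSub_eq_one hirrE' hφ hφ0 huni hιmem hι0 hψ hψ0 hιψ,
    fun m rE'' _ hirr'' hhom'' hleast'' => ?_⟩
  · obtain ⟨f, hf, hf0⟩ := Submodule.exists_mem_ne_zero_of_ne_bot hi
    exact hbE.2 ((Submodule.ne_bot_iff _).mpr ⟨f ∘ₗ ψ,
      comp_mem_equivSub (mem_equivSub_comp Subtype.val hf) hψ, hirrE'.comp_ne_zero hf hf0 hψ0⟩)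
  · obtain ⟨ψ'', hψ'', hψ''0⟩ := Submodule.exists_mem_ne_zero_of_ne_bot hhom''
    obtain ⟨f, hf, hf0⟩ := Submodule.exists_mem_ne_zero_of_ne_bot hleast''.1
    exact exists_linearEquiv_mem_equivSub_of_range_eq hι
      (hirr''.injective_of_mem_equivSub hf hf0) hιmem hf
      (hιE'.trans (range_eq_invariantSpan_range hS hφ hφ0 huni hirr'' hψ'' hψ''0 hf hf0).symm)

/-- Lusztig 1.17(a). Let `k` be algebraically closed of characteristic
`0`, `V = ⊕_ι k` a finite-dimensional `k`-vector space, `H` a finite subgroup of `GL(V)`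
(encoded by a faithful degree-preserving action of `H` on the symmetric algebra of `V`
by algebra automorphisms), and `K` a normal subgroup of `H`. Let `E` be an irreducible
univalent `K`-module with invariant `b_E` (the least `i` with `Hom_K(E, S^iV) ≠ 0`).
Then there is an irreducible `H`-module `E'` such that `E` occurs in `E'|_K` (that is,
`Hom_K(E, E'|_K) ≠ 0`) and `b_{E'} = b_E`; moreover `E'` is uniquely determined up to
isomorphism by these two properties, and `E'` is univalent. -/
theorem statement15 {k ι H : Type} [Field k] [IsAlgClosed k] [CharZero k]
    [Fintype ι] [Group H] [Fintype H]
    (rho : H → (MvPolynomial ι k ≃ₐ[k] MvPolynomial ι k))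
    (hact : IsAlgAction H rho) (hinj : Function.Injective rho)
    (hdeg : ∀ (g : H) (i : ℕ) (p : MvPolynomial ι k),
      p.IsHomogeneous i → (rho g p).IsHomogeneous i)
    (K : Subgroup H) (hK : K.Normal)
    {E : Type} [AddCommGroup E] [Module k E] [FiniteDimensional k E]
    (rE : ↥K → (E →ₗ[k] E)) (hE : IsAction ↥K rE) (hirr : IsIrred k ↥K rE)
    (bE : ℕ)
    (hbE : IsLeast {i | equivSub k ↥K rE (fun g : ↥K => srepFun rho hdeg i (g : H)) ≠ ⊥} bE)
    (huni : Module.finrank k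
      ↥(equivSub k ↥K rE (fun g : ↥K => srepFun rho hdeg bE (g : H))) = 1) :
    ∃ (n : ℕ) (rE' : H → ((Fin n → k) →ₗ[k] (Fin n → k))),
      IsAction H rE' ∧ IsIrred k H rE' ∧
      equivSub k ↥K rE (fun g : ↥K => rE' (g : H)) ≠ ⊥ ∧
      IsLeast {i | equivSub k H rE' (srepFun rho hdeg i) ≠ ⊥} bE ∧
      Module.finrank k ↥(equivSub k H rE' (srepFun rho hdeg bE)) = 1 ∧
      ∀ (m : ℕ) (rE'' : H → ((Fin m → k) →ₗ[k] (Fin m → k))),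
        IsAction H rE'' → IsIrred k H rE'' →
        equivSub k ↥K rE (fun g : ↥K => rE'' (g : H)) ≠ ⊥ →
        IsLeast {i | equivSub k H rE'' (srepFun rho hdeg i) ≠ ⊥} bE →
        ∃ e : (Fin n → k) ≃ₗ[k] (Fin m → k),
          ∀ g : H, (e.toLinearMap).comp (rE' g) = (rE'' g).comp e.toLinearMap :=
  statement15_general rho hact hdeg K rE bE hbE huni
end
end
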